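/- For n, k ≥ 1 there is a bijection ζ between k-Stirling permutations of order n and increasing pruned even k-ary forests on {1,...,n} such that ap(π) = lleaf(ζ(π)) − si(ζ(π)), where si counts singleton trees of the forest; moreover π begins with k equal letters if and only if ζ(π) lies in the subclass of forests whose rightmost tree is a singleton or has its first k−1 root-children as leaves. -/

import Mathlib

open Polynomial
open scoped Classical

noncomputable section

/-- Number of longest ascent-plateaux of the length-`L` word `v` (values in `ℕ`):
indices `i` with `v i < v (i+1) = v (i+2) = ⋯ = v (i+k)`. -/
def apWord (k L : ℕ) (v : ℕ → ℕ) : ℕ :=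
  ((Finset.range L).filter fun i =>
    i + k < L ∧ v i < v (i + 1) ∧ ∀ j < k, v (i + 1 + j) = v (i + 1)).card

/-- `w : Fin (k*n) → Fin n` is a `k`-Stirling permutation of order `n`: every letter
occurs exactly `k` times and letters lying between two equal letters are at least as
large. -/
def IsKStirling (k n : ℕ) (w : Fin (k * n) → Fin n) : Prop :=
  (∀ m : Fin n, (Finset.univ.filter fun i => w i = m).card = k) ∧
  (∀ i j l : Fin (k * n), i ≤ j → j ≤ l → w i = w l → w i ≤ w j)

/-- The word (with values in `{1,…,n}` and junk value `0` out of range) associated to a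
`k`-Stirling permutation. -/
def wordOf (k n : ℕ) (w : Fin (k * n) → Fin n) : ℕ → ℕ :=
  fun i => if h : i < k * n then (w ⟨i, h⟩ : ℕ) + 1 else 0

/-- The number `ap(π)` of longest ascent-plateaux of a `k`-Stirling permutation. -/
def apStat (k n : ℕ) (w : Fin (k * n) → Fin n) : ℕ :=
  apWord k (k * n) (wordOf k n w)

/-- The number `lap(π)` of left longest ascent-plateaux: longest ascent-plateaux of the
word `0π` obtained by prepending a zero. -/
def lapStat (k n : ℕ) (w : Fin (k * n) → Fin n) : ℕ :=
  apWord k (k * n + 1) (fun i => if i = 0 then 0 else wordOf k n w (i - 1))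

/-!  Increasing pruned even `k`-ary forests on a linearly ordered label set `α` are
encoded by parent functions `f : α → Option (α × Fin k)`: `f x = some (y, s)` means the
labeled node `x` is attached to the `s`-th (unlabeled) child of the labeled node `y`,
and `f x = none` means `x` is the root of a component.  The increasing condition says
that labels of the children of each node increase, so the ordered-tree structure is
determined by `f`; components are ordered by their (increasing) root labels.  -/

/-- The labeled node `u` has a labeled grand child (so it is an internal labeled node
carrying its `k` unlabeled children in the pruned tree). -/
def hasChild {α : Type} {k : ℕ} (f : α → Option (α × Fin k)) (u : α) : Prop :=
  ∃ x s, f x = some (u, s)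

/-- `f` encodes an increasing pruned even `k`-ary forest: parents carry smaller labels. -/
def IsForest {α : Type} [LT α] {k : ℕ} (f : α → Option (α × Fin k)) : Prop :=
  ∀ x y s, f x = some (y, s) → y < x

/-- `f` encodes an increasing pruned even `k`-ary tree: a forest with a unique root. -/
def IsTree {α : Type} [LT α] {k : ℕ} (f : α → Option (α × Fin k)) : Prop :=
  IsForest f ∧ ∃! r, f r = none

/-- `lleaf`: the number of labeled leaves. -/
noncomputable def lleafStat {α : Type} [Fintype α] {k : ℕ}
    (f : α → Option (α × Fin k)) : ℕ :=
  (Finset.univ.filter fun u => ¬ hasChild f u).card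

/-- `si`: the number of singleton components (roots that are leaves). -/
noncomputable def siStat {α : Type} [Fintype α] {k : ℕ}
    (f : α → Option (α × Fin k)) : ℕ :=
  (Finset.univ.filter fun u => f u = none ∧ ¬ hasChild f u).card

/-- A non-root labeled node is old if it carries the greatest label among all the
grand children of its grand parent. -/
def oldNode {α : Type} [LinearOrder α] {k : ℕ}
    (f : α → Option (α × Fin k)) (v : α) : Prop :=
  ∃ y s, f v = some (y, s) ∧ ∀ x : α, (∃ t, f x = some (y, t)) → x ≤ v

/-- A non-root labeled node that is not old is young. -/
def youngNode {α : Type} [LinearOrder α] {k : ℕ}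
    (f : α → Option (α × Fin k)) (v : α) : Prop :=
  (∃ y s, f v = some (y, s)) ∧ ¬ oldNode f v

/-- `oleaf`: the number of old labeled leaves. -/
noncomputable def oleafStat {α : Type} [LinearOrder α] [Fintype α] {k : ℕ}
    (f : α → Option (α × Fin k)) : ℕ :=
  (Finset.univ.filter fun v => oldNode f v ∧ ¬ hasChild f v).card

/-- `oint`: the number of old internal labeled nodes. -/
noncomputable def ointStat {α : Type} [LinearOrder α] [Fintype α] {k : ℕ}
    (f : α → Option (α × Fin k)) : ℕ :=
  (Finset.univ.filter fun v => oldNode f v ∧ hasChild f v).card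

/-- `F` has no young leaves. -/
def NoYoungLeaf {α : Type} [LinearOrder α] {k : ℕ}
    (f : α → Option (α × Fin k)) : Prop :=
  ∀ v : α, ¬ (youngNode f v ∧ ¬ hasChild f v)

/-- The generalized Foata–Strehl transformation `Φ_v`.  If `v` is an old internal node
with grand parent `u`, the subtrees hanging from the `k` children of `v` are transferred
(slotwise) to the corresponding children of `u`, turning `v` into a leaf; if `v` is a
young leaf, all subtrees hanging from the children of `u` whose root labels exceed `v`
are transferred (slotwise) to `k` freshly attached children of `v`; otherwise nothing
happens. -/
noncomputable def phi {α : Type} [LinearOrder α] {k : ℕ} (v : α)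
    (f : α → Option (α × Fin k)) : α → Option (α × Fin k) :=
  match f v with
  | none => f
  | some (u, _) =>
    if ∀ x : α, (∃ t, f x = some (u, t)) → x ≤ v then
      -- `v` is old
      if hasChild f v then
        (fun x => match f x with
          | some (w, j) => if w = v then some (u, j) else some (w, j)
          | none => none)
      else f
    else
      -- `v` is young
      if hasChild f v then f
      else
        (fun x => match f x with
          | some (w, j) => if w = u ∧ v < x then some (v, j) else some (w, j)
          | none => none)

/-- `u` is a removable old leaf of the forest `f`: an old leaf that is a grand child of
the root `r` of its component, the only leaf among the grand children of `r`, the first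
`k-1` children of `r` are leaves, and the label of `u` is smaller than the label of
every later root. -/
def removableOldLeaf {α : Type} [LinearOrder α] {k : ℕ}
    (f : α → Option (α × Fin k)) (u : α) : Prop :=
  oldNode f u ∧ ¬ hasChild f u ∧
  ∃ (r : α) (s : Fin k), f u = some (r, s) ∧ f r = none ∧
    (∀ x : α, (∃ t, f x = some (r, t)) → x ≠ u → hasChild f x) ∧
    (∀ (x : α) (j : Fin k), (j : ℕ) < k - 1 → f x ≠ some (r, j)) ∧
    (∀ r' : α, f r' = none → r < r' → u < r')

/-- `u` is a removable young leaf of the forest `f`: a young leaf that is a grand child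
of the root `r` of the rightmost component such that after applying `Φ_u` the first
`k-1` children of `r` are leaves. -/
noncomputable def removableYoungLeaf {α : Type} [LinearOrder α] {k : ℕ}
    (f : α → Option (α × Fin k)) (u : α) : Prop :=
  youngNode f u ∧ ¬ hasChild f u ∧
  ∃ (r : α) (s : Fin k), f u = some (r, s) ∧ f r = none ∧
    (∀ r' : α, f r' = none → r' ≤ r) ∧
    (∀ (x : α) (j : Fin k), (j : ℕ) < k - 1 → phi u f x ≠ some (r, j))

/-- The forest lies in the class `\overline{𝓕}_n(k)`: the rightmost tree is a singleton
or the first `k-1` children of its root are leaves. -/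
def inBarClass {α : Type} [LinearOrder α] {k : ℕ}
    (f : α → Option (α × Fin k)) : Prop :=
  ∃ r : α, f r = none ∧ (∀ r' : α, f r' = none → r' ≤ r) ∧
    (¬ hasChild f r ∨
      ∀ (x : α) (j : Fin k), (j : ℕ) < k - 1 → f x ≠ some (r, j))

/-!
The bijection `ζ` is built by induction on `n` and is not explicit: it comes from a matching.
Inserting the block `(n+1)^k` into one of the `k n + 1` gaps of `σ`, and attaching the label
`n + 1` to a forest `F` at one of its `k n + 1` places (as a new root, or below one of the `k`
slots of a labelled node), are both bijective. If `ap σ = lleaf F - si F`, gaps and places fall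
into blocks of equal sizes: the gap `0` and the new root leave both statistics unchanged, and so
do the `k · ap σ` gaps splitting a plateau and the `k (lleaf F - si F)` places below a non-root
leaf; every other gap or place raises both by one. If moreover `σ` starts with `k` equal letters
exactly when `F` lies in the bar class, then, when this holds, the gaps `1, …, k - 1` and the
first `k - 1` slots of the last root are exactly those that destroy it; when it fails, only the
gap `0` and the new root create it. So any bijection between gaps and places respecting these
blocks extends `ζ` from `n` to `n + 1`.
-/

open Finset

namespace StirlingForest

theorem card_filter_fin (N : ℕ) (P : ℕ → Prop) [DecidablePred P] :
    #(univ.filter fun j : Fin N => P j) = #((range N).filter P) := by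
  rw [← card_map Fin.valEmbedding, map_filter', Fin.map_valEmbedding_univ]
  congr 1
  ext j
  simp only [mem_filter, mem_Iio, mem_range]
  exact and_congr_right fun h => ⟨fun ⟨a, ha, he⟩ => he ▸ ha, fun ha => ⟨⟨j, h⟩, ha, rfl⟩⟩

theorem card_filter_fin_Ico {N a b : ℕ} (h : b ≤ N) :
    #(univ.filter fun j : Fin N => a ≤ (j : ℕ) ∧ (j : ℕ) < b) = b - a := by
  rw [card_filter_fin N (fun j => a ≤ j ∧ j < b), ← Nat.card_Ico]
  congr 1
  ext j
  simp only [mem_filter, mem_range, mem_Ico]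
  omega

section PartMatching

variable {X Y : Type*}

def partTag (x₀ : X) (D E : Finset X) (x : X) : Fin 4 :=
  if x = x₀ then 0 else if x ∈ D then 1 else if x ∈ E then 2 else 3

def IsPointedPartition (x₀ : X) (D E : Finset X) : Prop :=
  x₀ ∉ D ∧ x₀ ∉ E ∧ Disjoint D E

theorem IsPointedPartition.ite {x₀ : X} {D E : Finset X} {B : Prop} [Decidable B]
    (h₀ : x₀ ∉ D) (h : B → IsPointedPartition x₀ D E) :
    IsPointedPartition x₀ D (if B then E else ∅) := by
  split_ifs with hB
  · exact h hB
  · exact ⟨h₀, notMem_empty x₀, disjoint_empty_right D⟩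

theorem card_partTag_fiber [Fintype X] {x₀ : X} {D E : Finset X} (h : IsPointedPartition x₀ D E)
    (i : Fin 4) :
    Fintype.card {x // partTag x₀ D E x = i} =
      ![1, #D, #E, Fintype.card X - (1 + #D + #E)] i := by
  obtain ⟨h₀D, h₀E, hDE⟩ := h
  have hDE' : ∀ x ∈ D, x ∉ E := fun x hx => disjoint_left.1 hDE hx
  have fiber : univ.filter (partTag x₀ D E · = i) =
      ![{x₀}, D, E, univ \ insert x₀ (D ∪ E)] i := by
    ext x
    unfold partTag
    by_cases hx : x = x₀ <;> by_cases hd : x ∈ D <;> by_cases he : x ∈ E <;>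
      fin_cases i <;> simp_all
  rw [Fintype.card_subtype, fiber]
  fin_cases i <;> simp [card_sdiff, card_insert_of_notMem (by simp [h₀D, h₀E] : x₀ ∉ D ∪ E),
    card_union_of_disjoint hDE]
  omega

theorem exists_equiv_preserving_parts [Fintype X] [Fintype Y] {x₀ : X} {y₀ : Y}
    {D E : Finset X} {D' E' : Finset Y}
    (hX : IsPointedPartition x₀ D E) (hY : IsPointedPartition y₀ D' E')
    (hcard : Fintype.card X = Fintype.card Y) (hD : #D = #D') (hE : #E = #E') :
    ∃ e : X ≃ Y, ∀ x, (e x = y₀ ↔ x = x₀) ∧ (e x ∈ D' ↔ x ∈ D) ∧ (e x ∈ E' ↔ x ∈ E) := by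
  let e : X ≃ Y := Equiv.ofFiberEquiv fun i => Fintype.equivOfCardEq <| by
    rw [card_partTag_fiber hX, card_partTag_fiber hY, hcard, hD, hE]
  refine ⟨e, fun x => ?_⟩
  have he : partTag y₀ D' E' (e x) = partTag x₀ D E x := Equiv.ofFiberEquiv_map _ x
  obtain ⟨h₀D, h₀E, hDE⟩ := hX
  obtain ⟨h₀D', h₀E', hDE'⟩ := hY
  have := @disjoint_left.1 hDE x
  have := @disjoint_left.1 hDE' (e x)
  unfold partTag at he
  by_cases hx : x = x₀ <;> by_cases hd : x ∈ D <;> by_cases he' : x ∈ E <;>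
    by_cases hy : e x = y₀ <;> by_cases hd' : e x ∈ D' <;> by_cases he'' : e x ∈ E' <;>
    simp_all

end PartMatching

section Plateaux

variable {k L : ℕ} {v : ℕ → ℕ}

def IsPlateauStart (k L : ℕ) (v : ℕ → ℕ) (i : ℕ) : Prop :=
  i + k < L ∧ v i < v (i + 1) ∧ ∀ j < k, v (i + 1 + j) = v (i + 1)

def plateauStarts (k L : ℕ) (v : ℕ → ℕ) : Finset ℕ :=
  (range L).filter (IsPlateauStart k L v)

theorem mem_plateauStarts {i : ℕ} : i ∈ plateauStarts k L v ↔ IsPlateauStart k L v i := by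
  rw [plateauStarts, mem_filter, mem_range, and_iff_right_iff_imp]
  exact fun h => by have := h.1; omega

theorem apWord_eq_card : apWord k L v = #(plateauStarts k L v) := by
  unfold apWord plateauStarts IsPlateauStart
  exact congrArg card (filter_congr_decidable _ _ _).symm

theorem IsPlateauStart.add_le {i i' : ℕ} (hi : IsPlateauStart k L v i)
    (hi' : IsPlateauStart k L v i') (hlt : i < i') : i + k ≤ i' := by
  by_contra! h
  have e₁ := hi.2.2 (i' - (i + 1)) (by omega)
  have e₂ := hi.2.2 (i' + 1 - (i + 1)) (by omega)
  rw [show i + 1 + (i' - (i + 1)) = i' by omega] at e₁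
  rw [show i + 1 + (i' + 1 - (i + 1)) = i' + 1 by omega] at e₂
  exact absurd hi'.2.1 (by omega)

theorem IsPlateauStart.le_succ_of_flat {i : ℕ} (hi : IsPlateauStart k L v i)
    (hflat : ∀ j < k, v j = v 0) : k ≤ i + 1 := by
  by_contra! h
  exact absurd hi.2.1 (by rw [hflat i (by omega), hflat (i + 1) h]; omega)

theorem isPlateauStart_congr (hk : 1 ≤ k) {L' : ℕ} {v' : ℕ → ℕ} {i i' : ℕ}
    (hL : i + k < L ↔ i' + k < L') (hv : ∀ j ≤ k, v (i + j) = v' (i' + j)) :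
    IsPlateauStart k L v i ↔ IsPlateauStart k L' v' i' := by
  have hv' : ∀ j < k, v (i + 1 + j) = v' (i' + 1 + j) := fun j hj => by
    simpa only [add_assoc] using hv (1 + j) (by omega)
  have h₀ := hv 0 (Nat.zero_le _)
  have h₁ := hv' 0 (by omega)
  simp only [add_zero] at h₀ h₁
  unfold IsPlateauStart
  refine and_congr hL (and_congr (by rw [h₀, h₁]) (forall₂_congr fun j hj => ?_))
  rw [hv' j hj, h₁]

/-- The gap `p` (in front of the letter `v p`) lies inside the plateau starting at `i`, so
inserting a block there destroys that plateau. -/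
def Splits (k L : ℕ) (v : ℕ → ℕ) (p : ℕ) : Prop :=
  ∃ i, IsPlateauStart k L v i ∧ i < p ∧ p ≤ i + k

theorem Splits.pos {p : ℕ} (h : Splits k L v p) : 0 < p := by
  obtain ⟨i, -, hi, -⟩ := h; omega

theorem Splits.le_of_flat {p : ℕ} (h : Splits k L v p) (hflat : ∀ j < k, v j = v 0) :
    k ≤ p := by
  obtain ⟨i, hi, hip, -⟩ := h
  have := hi.le_succ_of_flat hflat
  omega

theorem card_plateauStarts_filter_splits (p : ℕ) :
    #((plateauStarts k L v).filter fun i => i < p ∧ p ≤ i + k) =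
      if Splits k L v p then 1 else 0 := by
  split_ifs with hs
  · obtain ⟨i, hi, h₁, h₂⟩ := hs
    refine le_antisymm (card_le_one.2 fun a ha b hb => ?_)
      (card_pos.2 ⟨i, mem_filter.2 ⟨mem_plateauStarts.2 hi, h₁, h₂⟩⟩)
    simp only [mem_filter, mem_plateauStarts] at ha hb
    rcases lt_trichotomy a b with hab | hab | hab
    · have := ha.1.add_le hb.1 hab; omega
    · exact hab
    · have := hb.1.add_le ha.1 hab; omega
  · refine card_eq_zero.2 (filter_eq_empty_iff.2 fun i hi h => hs ⟨i, ?_, h⟩)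
    exact mem_plateauStarts.1 hi

theorem card_splits : #((range (L + 1)).filter (Splits k L v)) = k * apWord k L v := by
  have hset : (range (L + 1)).filter (Splits k L v) =
      (plateauStarts k L v).biUnion fun i => Ioc i (i + k) := by
    ext p
    simp only [mem_filter, mem_range, mem_biUnion, mem_Ioc, mem_plateauStarts, Splits]
    constructor
    · rintro ⟨-, i, hi, h₁, h₂⟩
      exact ⟨i, hi, h₁, h₂⟩
    · rintro ⟨i, hi, h₁, h₂⟩
      exact ⟨by have := hi.1; omega, i, hi, h₁, h₂⟩
  rw [hset, card_biUnion, apWord_eq_card, card_eq_sum_ones, mul_sum, mul_one]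
  · exact sum_congr rfl fun i _ => by simp
  · intro i hi i' hi' hne
    rw [mem_coe, mem_plateauStarts] at hi hi'
    rw [Function.onFun, disjoint_left]
    intro p h h'
    rw [mem_Ioc] at h h'
    rcases lt_or_gt_of_ne hne with hlt | hlt
    · have := hi.add_le hi' hlt; omega
    · have := hi'.add_le hi hlt; omega

theorem card_filter_trichotomy (s : Finset ℕ) (p k : ℕ) :
    #s = #(s.filter (· + k < p)) + #(s.filter fun i => i < p ∧ p ≤ i + k) +
      #(s.filter (p ≤ ·)) := by
  simp only [card_eq_sum_ones, sum_filter, ← sum_add_distrib]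
  refine sum_congr rfl fun i _ => ?_
  split_ifs <;> omega

end Plateaux

section WordInsertion

variable {k L p N : ℕ} {v : ℕ → ℕ}

def insertBlock (p N k : ℕ) (v : ℕ → ℕ) : ℕ → ℕ :=
  fun j => if j < p then v j else if j < p + k then N else v (j - k)

theorem insertBlock_of_lt {j : ℕ} (h : j < p) : insertBlock p N k v j = v j := if_pos h

theorem insertBlock_of_mem {j : ℕ} (h₁ : p ≤ j) (h₂ : j < p + k) :
    insertBlock p N k v j = N := by
  rw [insertBlock, if_neg (by omega), if_pos h₂]

theorem insertBlock_add {j : ℕ} (h : p ≤ j) : insertBlock p N k v (j + k) = v j := by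
  rw [insertBlock, if_neg (by omega), if_neg (by omega), Nat.add_sub_cancel]

variable (hk : 1 ≤ k) (hp : p ≤ L) (hv : ∀ j < L, v j < N)
include hk hp

theorem isPlateauStart_insertBlock_of_lt {i : ℕ} (hi : i + k < p) :
    IsPlateauStart k (L + k) (insertBlock p N k v) i ↔ IsPlateauStart k L v i :=
  isPlateauStart_congr hk (by omega) fun j hj => insertBlock_of_lt (by omega)

omit hp in
theorem isPlateauStart_insertBlock_add {i : ℕ} (hi : p ≤ i) :
    IsPlateauStart k (L + k) (insertBlock p N k v) (i + k) ↔ IsPlateauStart k L v i :=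
  isPlateauStart_congr hk (by omega) fun j hj => by
    rw [show i + k + j = i + j + k by omega, insertBlock_add (by omega)]

include hv

theorem isPlateauStart_insertBlock_pred (h : 0 < p) :
    IsPlateauStart k (L + k) (insertBlock p N k v) (p - 1) := by
  refine ⟨by omega, ?_, fun j hj => ?_⟩
  · rw [insertBlock_of_lt (by omega), insertBlock_of_mem (by omega) (by omega)]
    exact hv _ (by omega)
  · rw [insertBlock_of_mem (by omega) (by omega), insertBlock_of_mem (by omega) (by omega)]

theorem not_isPlateauStart_insertBlock {i : ℕ} (h₁ : p ≤ i + k) (h₂ : i < p + k)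
    (h₃ : i + 1 ≠ p) : ¬ IsPlateauStart k (L + k) (insertBlock p N k v) i := by
  rintro ⟨hiL, hasc, hflat⟩
  by_cases hip : i < p
  · have := hflat (p - (i + 1)) (by omega)
    rw [show i + 1 + (p - (i + 1)) = p by omega, insertBlock_of_mem le_rfl (by omega),
      insertBlock_of_lt (by omega)] at this
    exact absurd (hv (i + 1) (by omega)) (by omega)
  · rw [insertBlock_of_mem (by omega) h₂] at hasc
    by_cases hend : i + 1 < p + k
    · rw [insertBlock_of_mem (by omega) hend] at hasc
      exact lt_irrefl _ hasc
    · rw [show i + 1 = p + k by omega, insertBlock_add le_rfl] at hasc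
      exact absurd (hv p (by omega)) (by omega)

omit hv in
theorem plateauStarts_insertBlock_filter_lt :
    (plateauStarts k (L + k) (insertBlock p N k v)).filter (· + k < p) =
      (plateauStarts k L v).filter (· + k < p) := by
  ext i
  simp only [mem_filter, mem_plateauStarts]
  exact ⟨fun ⟨hi, h⟩ => ⟨(isPlateauStart_insertBlock_of_lt hk hp h).1 hi, h⟩,
    fun ⟨hi, h⟩ => ⟨(isPlateauStart_insertBlock_of_lt hk hp h).2 hi, h⟩⟩

theorem plateauStarts_insertBlock_filter_straddle :
    (plateauStarts k (L + k) (insertBlock p N k v)).filter (fun i => i < p ∧ p ≤ i + k) =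
      Ico (p - 1) p := by
  ext i
  simp only [mem_filter, mem_plateauStarts, mem_Ico]
  constructor
  · rintro ⟨hi, h₁, h₂⟩
    by_contra h
    exact not_isPlateauStart_insertBlock hk hp hv h₂ (by omega) (by omega) hi
  · rintro ⟨h₁, h₂⟩
    obtain rfl : i = p - 1 := by omega
    exact ⟨isPlateauStart_insertBlock_pred hk hp hv (by omega), by omega, by omega⟩

theorem plateauStarts_insertBlock_filter_ge :
    (plateauStarts k (L + k) (insertBlock p N k v)).filter (p ≤ ·) =
      ((plateauStarts k L v).filter (p ≤ ·)).map (addRightEmbedding k) := by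
  ext i
  simp only [mem_filter, mem_plateauStarts, mem_map, addRightEmbedding_apply]
  constructor
  · rintro ⟨hi, h⟩
    by_cases hik : i < p + k
    · exact absurd hi (not_isPlateauStart_insertBlock hk hp hv (by omega) hik (by omega))
    · obtain ⟨a, rfl⟩ : ∃ a, i = a + k := ⟨i - k, by omega⟩
      exact ⟨a, ⟨(isPlateauStart_insertBlock_add hk (by omega)).1 hi, by omega⟩, rfl⟩
  · rintro ⟨a, ⟨ha, h⟩, rfl⟩
    exact ⟨(isPlateauStart_insertBlock_add hk h).2 ha, by omega⟩

/-- Inserting a block of a new largest letter at a gap `p > 0` creates the plateau starting at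
`p - 1` and destroys the one it splits, if any. -/
theorem apWord_insertBlock :
    apWord k (L + k) (insertBlock p N k v) =
      apWord k L v + if p = 0 ∨ Splits k L v p then 0 else 1 := by
  have hA := card_filter_trichotomy (plateauStarts k L v) p k
  have hA' := card_filter_trichotomy (plateauStarts k (L + k) (insertBlock p N k v)) p k
  rw [card_plateauStarts_filter_splits] at hA
  rw [plateauStarts_insertBlock_filter_lt hk hp, plateauStarts_insertBlock_filter_straddle hk hp hv,
    plateauStarts_insertBlock_filter_ge hk hp hv, card_map, Nat.card_Ico] at hA'
  rw [apWord_eq_card, apWord_eq_card]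
  have := fun h : Splits k L v p => h.pos
  by_cases hs : Splits k L v p <;> by_cases hp0 : p = 0 <;> simp [hs, hp0] at hA hA' ⊢ <;> omega

end WordInsertion

section StirlingInsertion

variable {k n : ℕ}

abbrev StirlingPerm (k n : ℕ) := {w : Fin (k * n) → Fin n // IsKStirling k n w}

def gapShift (k : ℕ) {n : ℕ} (p : Fin (k * n + 1)) : Fin (k * n) ↪o Fin (k * (n + 1)) :=
  OrderEmbedding.ofStrictMono
    (fun i => ⟨if (i : ℕ) < p then (i : ℕ) else i + k, by
      have := i.isLt; rw [Nat.mul_succ]; split_ifs <;> omega⟩)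
    fun a b h => by simp only [Fin.lt_def] at h ⊢; split_ifs <;> omega

theorem val_gapShift (p : Fin (k * n + 1)) (i : Fin (k * n)) :
    (gapShift k p i : ℕ) = if (i : ℕ) < p then (i : ℕ) else i + k := rfl

theorem gapShift_notMem_block (p : Fin (k * n + 1)) (i : Fin (k * n)) :
    ¬ ((p : ℕ) ≤ gapShift k p i ∧ (gapShift k p i : ℕ) < p + k) := by
  rw [val_gapShift]; split_ifs <;> omega

theorem exists_gapShift_eq {p : Fin (k * n + 1)} {j : Fin (k * (n + 1))}
    (hj : ¬ ((p : ℕ) ≤ j ∧ (j : ℕ) < p + k)) : ∃ i, gapShift k p i = j := by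
  have := lt_of_lt_of_eq j.isLt (Nat.mul_succ k n)
  by_cases hjp : (j : ℕ) < p
  · exact ⟨⟨j, by omega⟩, Fin.ext <| by simp [val_gapShift, hjp]⟩
  · exact ⟨⟨j - k, by omega⟩, Fin.ext <| by rw [val_gapShift, if_neg (by simp; omega)]; simp; omega⟩

def insertMax (σ : Fin (k * n) → Fin n) (p : Fin (k * n + 1)) :
    Fin (k * (n + 1)) → Fin (n + 1) := fun j =>
  if h : (p : ℕ) ≤ j ∧ (j : ℕ) < p + k then Fin.last n
  else (σ (exists_gapShift_eq h).choose).castSucc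

theorem insertMax_eq_last_iff {σ : Fin (k * n) → Fin n} {p : Fin (k * n + 1)}
    {j : Fin (k * (n + 1))} :
    insertMax σ p j = Fin.last n ↔ (p : ℕ) ≤ j ∧ (j : ℕ) < p + k := by
  unfold insertMax
  split_ifs with h
  · simp [h]
  · simp [h, Fin.castSucc_ne_last]

theorem insertMax_gapShift (σ : Fin (k * n) → Fin n) (p : Fin (k * n + 1)) (i : Fin (k * n)) :
    insertMax σ p (gapShift k p i) = (σ i).castSucc := by
  have h := gapShift_notMem_block p i
  rw [insertMax, dif_neg h, (gapShift k p).injective (exists_gapShift_eq h).choose_spec]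

theorem insertMax_of_lt (σ : Fin (k * n) → Fin n) {p : Fin (k * n + 1)}
    {j : Fin (k * (n + 1))} (h : (j : ℕ) < p) :
    insertMax σ p j = (σ ⟨j, by omega⟩).castSucc := by
  rw [← insertMax_gapShift σ p]
  congr 1
  exact Fin.ext (by simp [val_gapShift, h])

theorem insertMax_of_add_le (σ : Fin (k * n) → Fin n) {p : Fin (k * n + 1)}
    {j : Fin (k * (n + 1))} (h : (p : ℕ) + k ≤ j) :
    insertMax σ p j =
      (σ ⟨j - k, by have := lt_of_lt_of_eq j.isLt (Nat.mul_succ k n); omega⟩).castSucc := by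
  rw [← insertMax_gapShift σ p]
  congr 1
  exact Fin.ext (by rw [val_gapShift, if_neg (by simp; omega)]; simp; omega)

theorem card_insertMax_castSucc (σ : Fin (k * n) → Fin n) (p : Fin (k * n + 1)) (m : Fin n) :
    #(univ.filter fun j => insertMax σ p j = m.castSucc) = #(univ.filter fun i => σ i = m) := by
  rw [← card_map (gapShift k p).toEmbedding]
  congr 1
  ext j
  simp only [mem_filter, mem_univ, true_and, mem_map, RelEmbedding.coe_toEmbedding]
  constructor
  · intro h
    have hj : ¬ ((p : ℕ) ≤ j ∧ (j : ℕ) < p + k) := by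
      rw [← insertMax_eq_last_iff, h]; exact Fin.castSucc_ne_last m
    obtain ⟨i, rfl⟩ := exists_gapShift_eq hj
    exact ⟨i, Fin.castSucc_injective _ (by rw [← h, insertMax_gapShift]), rfl⟩
  · rintro ⟨i, rfl, rfl⟩
    exact insertMax_gapShift σ p i

theorem card_insertMax_last (σ : Fin (k * n) → Fin n) (p : Fin (k * n + 1)) :
    #(univ.filter fun j => insertMax σ p j = Fin.last n) = k := by
  simp_rw [insertMax_eq_last_iff]
  rw [card_filter_fin_Ico (by have := p.isLt; rw [Nat.mul_succ]; omega), Nat.add_sub_cancel_left]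

theorem isKStirling_insertMax_iff {σ : Fin (k * n) → Fin n} {p : Fin (k * n + 1)} :
    IsKStirling k (n + 1) (insertMax σ p) ↔ IsKStirling k n σ := by
  constructor
  · refine fun h => ⟨fun m => card_insertMax_castSucc σ p m ▸ h.1 _, fun i j l hij hjl hil => ?_⟩
    have := h.2 (gapShift k p i) (gapShift k p j) (gapShift k p l) (by simpa) (by simpa)
      (by rw [insertMax_gapShift, insertMax_gapShift, hil])
    rwa [insertMax_gapShift, insertMax_gapShift, Fin.castSucc_le_castSucc_iff] at this
  · refine fun h => ⟨fun m => ?_, fun i j l hij hjl hil => ?_⟩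
    · induction m using Fin.lastCases with
      | last => exact card_insertMax_last σ p
      | cast m => exact (card_insertMax_castSucc σ p m).trans (h.1 m)
    by_cases hj : (p : ℕ) ≤ j ∧ (j : ℕ) < p + k
    · exact (insertMax_eq_last_iff.2 hj).symm ▸ Fin.le_last _
    by_cases hi : (p : ℕ) ≤ i ∧ (i : ℕ) < p + k
    · have hl := insertMax_eq_last_iff.1 (hil ▸ insertMax_eq_last_iff.2 hi)
      exact absurd ⟨hi.1.trans (Fin.le_def.1 hij), lt_of_le_of_lt (Fin.le_def.1 hjl) hl.2⟩ hj
    have hl : ¬ ((p : ℕ) ≤ l ∧ (l : ℕ) < p + k) := by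
      rwa [← insertMax_eq_last_iff, ← hil, insertMax_eq_last_iff]
    obtain ⟨i, rfl⟩ := exists_gapShift_eq hi
    obtain ⟨j, rfl⟩ := exists_gapShift_eq hj
    obtain ⟨l, rfl⟩ := exists_gapShift_eq hl
    simp only [insertMax_gapShift, Fin.castSucc_inj, Fin.castSucc_le_castSucc_iff,
      OrderEmbedding.le_iff_le] at hij hjl hil ⊢
    exact h.2 i j l hij hjl hil

theorem exists_block_eq_last (hk : 1 ≤ k) {w : Fin (k * (n + 1)) → Fin (n + 1)}
    (hw : IsKStirling k (n + 1) w) :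
    ∃ p : Fin (k * n + 1), ∀ j, w j = Fin.last n ↔ (p : ℕ) ≤ j ∧ (j : ℕ) < p + k := by
  set S := univ.filter fun j => w j = Fin.last n
  have hS : #S = k := hw.1 _
  have hne : S.Nonempty := card_pos.1 (by omega)
  have hP : w (S.min' hne) = Fin.last n := (mem_filter.1 (S.min'_mem hne)).2
  have hQ : w (S.max' hne) = Fin.last n := (mem_filter.1 (S.max'_mem hne)).2
  have hPQ : ∀ j, w j = Fin.last n ↔ ((S.min' hne : ℕ) ≤ j ∧ (j : ℕ) < S.max' hne + 1) := by
    intro j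
    rw [← Fin.le_def, Nat.lt_succ_iff, ← Fin.le_def]
    refine ⟨fun h => ⟨S.min'_le j (by simpa [S]), S.le_max' j (by simpa [S])⟩,
      fun ⟨h₁, h₂⟩ => le_antisymm (Fin.le_last _) ?_⟩
    exact hP ▸ hw.2 _ j _ h₁ h₂ (hP.trans hQ.symm)
  have hcard : (S.max' hne : ℕ) + 1 - S.min' hne = k := by
    rw [← card_filter_fin_Ico (S.max' hne).isLt]
    exact (congrArg card (filter_congr fun j _ => (hPQ j).symm)).trans hS
  have hQlt := lt_of_lt_of_eq (S.max' hne).isLt (Nat.mul_succ k n)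
  refine ⟨⟨S.min' hne, by omega⟩, fun j => (hPQ j).trans ?_⟩
  simp only
  omega

theorem insertMax_injective (hk : 1 ≤ k) {σ σ' : Fin (k * n) → Fin n} {p p' : Fin (k * n + 1)}
    (h : insertMax σ p = insertMax σ' p') : σ = σ' ∧ p = p' := by
  have hblock : ∀ j : Fin (k * (n + 1)),
      (p : ℕ) ≤ j ∧ (j : ℕ) < p + k ↔ (p' : ℕ) ≤ j ∧ (j : ℕ) < p' + k := fun j => by
    rw [← insertMax_eq_last_iff, ← insertMax_eq_last_iff, h]
  have hp := p.isLt
  have hp' := p'.isLt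
  have hkn : k * (n + 1) = k * n + k := Nat.mul_succ k n
  have h₁ := (hblock ⟨p, by omega⟩).1
  have h₂ := (hblock ⟨p', by omega⟩).2
  simp only [le_refl, true_and] at h₁ h₂
  obtain rfl : p = p' := Fin.ext (by omega)
  refine ⟨funext fun i => Fin.castSucc_injective _ ?_, rfl⟩
  rw [← insertMax_gapShift, ← insertMax_gapShift, h]

theorem exists_insertMax_eq (hk : 1 ≤ k) {w : Fin (k * (n + 1)) → Fin (n + 1)}
    (hw : IsKStirling k (n + 1) w) :
    ∃ (σ : Fin (k * n) → Fin n) (p : Fin (k * n + 1)), insertMax σ p = w := by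
  obtain ⟨p, hp⟩ := exists_block_eq_last hk hw
  refine ⟨fun i => (w (gapShift k p i)).castPred ?_, p, funext fun j => ?_⟩
  · exact fun h => gapShift_notMem_block p i ((hp _).1 h)
  by_cases hj : (p : ℕ) ≤ j ∧ (j : ℕ) < p + k
  · rw [insertMax_eq_last_iff.2 hj, (hp j).2 hj]
  · obtain ⟨i, rfl⟩ := exists_gapShift_eq hj
    rw [insertMax_gapShift, Fin.castSucc_castPred]

def insertMaxEquiv (hk : 1 ≤ k) : StirlingPerm k n × Fin (k * n + 1) ≃ StirlingPerm k (n + 1) :=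
  Equiv.ofBijective (fun x => ⟨insertMax x.1.1 x.2, isKStirling_insertMax_iff.2 x.1.2⟩) <| by
    refine ⟨fun x y h => ?_, fun w => ?_⟩
    · obtain ⟨h₁, h₂⟩ := insertMax_injective hk (congrArg Subtype.val h)
      exact Prod.ext (Subtype.ext h₁) h₂
    · obtain ⟨σ, p, h⟩ := exists_insertMax_eq hk w.2
      exact ⟨(⟨σ, isKStirling_insertMax_iff.1 (h ▸ w.2)⟩, p), Subtype.ext h⟩

theorem insertMaxEquiv_apply (hk : 1 ≤ k) (x : StirlingPerm k n × Fin (k * n + 1)) :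
    (insertMaxEquiv hk x).1 = insertMax x.1.1 x.2 := rfl

end StirlingInsertion

section StirlingStatistics

variable {k n : ℕ}

theorem wordOf_insertMax (σ : Fin (k * n) → Fin n) (p : Fin (k * n + 1)) :
    wordOf k (n + 1) (insertMax σ p) = insertBlock p (n + 1) k (wordOf k n σ) := by
  have hp := p.isLt
  have hkn : k * (n + 1) = k * n + k := Nat.mul_succ k n
  funext j
  by_cases hj : j < k * (n + 1)
  · by_cases h₁ : j < p
    · rw [insertBlock_of_lt h₁, wordOf, wordOf, dif_pos hj, dif_pos (by omega),
        insertMax_of_lt σ (j := ⟨j, hj⟩) h₁, Fin.val_castSucc]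
    by_cases h₂ : j < p + k
    · rw [insertBlock_of_mem (by omega) h₂, wordOf, dif_pos hj,
        insertMax_eq_last_iff.2 ⟨by simp; omega, h₂⟩, Fin.val_last]
    · obtain ⟨i, rfl⟩ : ∃ i, j = i + k := ⟨j - k, by omega⟩
      rw [insertBlock_add (by omega), wordOf, wordOf, dif_pos hj, dif_pos (by omega),
        insertMax_of_add_le σ (j := ⟨i + k, hj⟩) (by simp; omega), Fin.val_castSucc]
      simp
  · obtain ⟨i, rfl⟩ : ∃ i, j = i + k := ⟨j - k, by omega⟩
    rw [insertBlock_add (by omega), wordOf, wordOf, dif_neg hj, dif_neg (by omega)]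

theorem apStat_insertMax (hk : 1 ≤ k) (σ : Fin (k * n) → Fin n) (p : Fin (k * n + 1)) :
    apStat k (n + 1) (insertMax σ p) =
      apStat k n σ + if (p : ℕ) = 0 ∨ Splits k (k * n) (wordOf k n σ) p then 0 else 1 := by
  unfold apStat
  rw [wordOf_insertMax, Nat.mul_succ]
  refine apWord_insertBlock hk (Nat.lt_succ_iff.1 p.isLt) fun j hj => ?_
  rw [wordOf, dif_pos hj]
  exact Nat.succ_lt_succ (Fin.is_lt _)

def StartsFlat (k n : ℕ) (w : Fin (k * n) → Fin n) : Prop :=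
  ∀ i : Fin (k * n), (i : ℕ) < k → ∀ h0 : 0 < k * n, w i = w ⟨0, h0⟩

theorem startsFlat_insertMax_iff (hk : 1 ≤ k) {σ : Fin (k * n) → Fin n}
    {p : Fin (k * n + 1)} :
    StartsFlat k (n + 1) (insertMax σ p) ↔ (p : ℕ) = 0 ∨ (k ≤ p ∧ StartsFlat k n σ) := by
  have hp := p.isLt
  have hkn : k * (n + 1) = k * n + k := Nat.mul_succ k n
  have h₀ : 0 < k * (n + 1) := by omega
  have hlow : ∀ (j : Fin (k * (n + 1))) (hj : (j : ℕ) < p),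
      insertMax σ p j = (σ ⟨j, by omega⟩).castSucc := fun j hj => insertMax_of_lt σ hj
  unfold StartsFlat
  by_cases hp₀ : (p : ℕ) = 0
  · refine iff_of_true (fun i hi h0 => ?_) (Or.inl hp₀)
    have hlast : ∀ j : Fin (k * (n + 1)), (j : ℕ) < k → insertMax σ p j = Fin.last n :=
      fun j hj => insertMax_eq_last_iff.2 ⟨by omega, by omega⟩
    rw [hlast i hi, hlast ⟨0, h0⟩ (show 0 < k by omega)]
  by_cases hpk : k ≤ (p : ℕ)
  · simp only [hp₀, hpk, true_and, false_or]
    constructor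
    · intro h i hi h0
      have := h ⟨i, by omega⟩ hi h₀
      rwa [hlow _ (show (i : ℕ) < p by omega), hlow ⟨0, h₀⟩ (show 0 < (p : ℕ) by omega),
        Fin.castSucc_inj] at this
    · intro h i hi h0
      rw [hlow i (by omega), hlow ⟨0, h0⟩ (show 0 < (p : ℕ) by omega)]
      exact congrArg _ (h _ hi (by omega))
  · simp only [hp₀, hpk, false_and, or_self, iff_false]
    intro h
    have := h ⟨p, by omega⟩ (show (p : ℕ) < k by omega) h₀
    have hlast : insertMax σ p ⟨p, by omega⟩ = Fin.last n :=
      insertMax_eq_last_iff.2 ⟨le_rfl, show (p : ℕ) < p + k by omega⟩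
    rw [hlast, hlow ⟨0, h₀⟩ (show 0 < (p : ℕ) by omega)] at this
    exact Fin.castSucc_ne_last _ this.symm

theorem StartsFlat.wordOf_eq (hn : 1 ≤ n) {σ : Fin (k * n) → Fin n} (h : StartsFlat k n σ) :
    ∀ i < k, wordOf k n σ i = wordOf k n σ 0 := by
  intro i hi
  have hkn : k ≤ k * n := Nat.le_mul_of_pos_right k hn
  unfold wordOf
  rw [dif_pos (by omega), dif_pos (by omega), h ⟨i, by omega⟩ hi]

def splitGaps (σ : Fin (k * n) → Fin n) : Finset (Fin (k * n + 1)) :=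
  univ.filter fun p => Splits k (k * n) (wordOf k n σ) p

theorem card_splitGaps (σ : Fin (k * n) → Fin n) : #(splitGaps σ) = k * apStat k n σ := by
  rw [splitGaps, card_filter_fin (k * n + 1) (Splits k (k * n) (wordOf k n σ)), card_splits]
  rfl

theorem zero_notMem_splitGaps (σ : Fin (k * n) → Fin n) : 0 ∉ splitGaps σ := by
  rw [splitGaps, mem_filter]
  exact fun h => absurd h.2.pos (by simp)

def lowGaps (k n : ℕ) : Finset (Fin (k * n + 1)) :=
  univ.filter fun p => 1 ≤ (p : ℕ) ∧ (p : ℕ) < k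

theorem card_lowGaps (hn : 1 ≤ n) : #(lowGaps k n) = k - 1 :=
  card_filter_fin_Ico (by have := Nat.le_mul_of_pos_right k hn; omega)

theorem StartsFlat.isPointedPartition (hn : 1 ≤ n) {σ : Fin (k * n) → Fin n}
    (hσ : StartsFlat k n σ) : IsPointedPartition 0 (splitGaps σ) (lowGaps k n) := by
  refine ⟨zero_notMem_splitGaps σ, by simp [lowGaps], disjoint_filter.2 fun p _ hp => ?_⟩
  have := hp.le_of_flat (hσ.wordOf_eq hn)
  omega

end StirlingStatistics

section Leaves

variable {α : Type} [Fintype α] {k : ℕ}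

def nonrootLeaves (f : α → Option (α × Fin k)) : Finset α :=
  univ.filter fun u => ¬ hasChild f u ∧ f u ≠ none

theorem lleafStat_eq_siStat_add (f : α → Option (α × Fin k)) :
    lleafStat f = siStat f + #(nonrootLeaves f) := by
  rw [lleafStat, siStat, nonrootLeaves,
    ← card_filter_add_card_filter_not (p := fun u => f u = none), filter_filter, filter_filter]
  congr 2
  ext u
  simp [and_comm]

theorem IsForest.exists_greatest_root [LinearOrder α] [Nonempty α] {f : α → Option (α × Fin k)}
    (hf : IsForest f) : ∃ r, f r = none ∧ ∀ r', f r' = none → r' ≤ r := by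
  obtain ⟨m, -, hm⟩ := (univ : Finset α).exists_min_image id univ_nonempty
  have hroot : (univ.filter fun r => f r = none).Nonempty := by
    refine ⟨m, mem_filter.2 ⟨mem_univ _, ?_⟩⟩
    rcases h : f m with _ | ⟨y, s⟩
    · rfl
    · exact absurd (hm y (mem_univ _)) (not_le.2 (hf _ _ _ h))
  refine ⟨_, (mem_filter.1 (max'_mem _ hroot)).2, fun r' hr' => le_max' _ _ ?_⟩
  exact mem_filter.2 ⟨mem_univ _, hr'⟩

omit [Fintype α] in
theorem inBarClass_iff [LinearOrder α] {f : α → Option (α × Fin k)} {r : α} (hr : f r = none)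
    (hmax : ∀ r', f r' = none → r' ≤ r) :
    inBarClass f ↔ ∀ x (j : Fin k), (j : ℕ) < k - 1 → f x ≠ some (r, j) := by
  refine ⟨?_, fun h => ⟨r, hr, hmax, Or.inr h⟩⟩
  rintro ⟨r', hr', hmax', hleaf | h⟩ <;> obtain rfl := le_antisymm (hmax r' hr') (hmax' r hr)
  · exact fun x j _ hx => hleaf ⟨x, j, hx⟩
  · exact h

end Leaves

section ForestAttachment

variable {k n : ℕ}

abbrev PrunedForest (k n : ℕ) := {f : Fin n → Option (Fin n × Fin k) // IsForest f}

def liftParent : Option (Fin n × Fin k) → Option (Fin (n + 1) × Fin k) :=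
  Option.map (Prod.map Fin.castSucc id)

theorem liftParent_injective : Function.Injective (liftParent (n := n) (k := k)) :=
  Option.map_injective (Fin.castSucc_injective n |>.prodMap Function.injective_id)

@[simp]
theorem liftParent_none : liftParent (none : Option (Fin n × Fin k)) = none := rfl

@[simp]
theorem liftParent_some (y : Fin n) (s : Fin k) :
    liftParent (some (y, s)) = some (y.castSucc, s) := rfl

@[simp]
theorem liftParent_eq_none {o : Option (Fin n × Fin k)} : liftParent o = none ↔ o = none :=
  Option.map_eq_none_iff

theorem liftParent_eq_some_castSucc_iff {o : Option (Fin n × Fin k)} {y : Fin n} {s : Fin k} :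
    liftParent o = some (y.castSucc, s) ↔ o = some (y, s) := by
  rw [← liftParent_some, liftParent_injective.eq_iff]

theorem liftParent_ne_some_last (o : Option (Fin n × Fin k)) (s : Fin k) :
    liftParent o ≠ some (Fin.last n, s) := by
  rcases o with _ | ⟨y, t⟩ <;> simp [Fin.castSucc_ne_last]

def attachMax (f : Fin n → Option (Fin n × Fin k)) (o : Option (Fin n × Fin k)) :
    Fin (n + 1) → Option (Fin (n + 1) × Fin k) :=
  Fin.lastCases (liftParent o) fun u => liftParent (f u)

variable {f : Fin n → Option (Fin n × Fin k)} {o : Option (Fin n × Fin k)}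

@[simp]
theorem attachMax_last : attachMax f o (Fin.last n) = liftParent o := Fin.lastCases_last

@[simp]
theorem attachMax_castSucc (u : Fin n) : attachMax f o u.castSucc = liftParent (f u) :=
  Fin.lastCases_castSucc _

theorem isForest_attachMax (hf : IsForest f) : IsForest (attachMax f o) := by
  intro x y s hx
  induction x using Fin.lastCases with
  | last =>
    rw [attachMax_last] at hx
    rcases o with _ | ⟨y', s'⟩ <;> simp only [liftParent_none, liftParent_some, reduceCtorEq,
      Option.some.injEq, Prod.mk.injEq] at hx
    exact hx.1 ▸ Fin.castSucc_lt_last y'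
  | cast u =>
    rw [attachMax_castSucc] at hx
    rcases h : f u with _ | ⟨y', s'⟩ <;> simp only [h, liftParent_none, liftParent_some,
      reduceCtorEq, Option.some.injEq, Prod.mk.injEq] at hx
    exact hx.1 ▸ Fin.castSucc_lt_castSucc_iff.2 (hf u y' s' h)

theorem IsForest.exists_liftParent_eq {f' : Fin (n + 1) → Option (Fin (n + 1) × Fin k)}
    (hf' : IsForest f') (x : Fin (n + 1)) : ∃ o, liftParent o = f' x := by
  rcases h : f' x with _ | ⟨y, s⟩
  · exact ⟨none, rfl⟩
  · have hy : y ≠ Fin.last n := ((hf' x y s h).trans_le (Fin.le_last x)).ne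
    exact ⟨some (y.castPred hy, s), by simp⟩

def attachMaxEquiv : PrunedForest k n × Option (Fin n × Fin k) ≃ PrunedForest k (n + 1) :=
  Equiv.ofBijective (fun x => ⟨attachMax x.1.1 x.2, isForest_attachMax x.1.2⟩) <| by
    refine ⟨fun ⟨f, o⟩ ⟨g, o'⟩ h => ?_, fun f' => ?_⟩
    · have h := congrArg Subtype.val h
      refine Prod.ext (Subtype.ext (funext fun u => liftParent_injective ?_))
        (liftParent_injective ?_)
      · simpa using congrFun h u.castSucc
      · simpa using congrFun h (Fin.last n)
    · choose g hg using IsForest.exists_liftParent_eq f'.2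
      have hf : IsForest fun u => g u.castSucc := by
        intro x y s hx
        refine Fin.castSucc_lt_castSucc_iff.1 (f'.2 x.castSucc y.castSucc s ?_)
        rw [← hg, show g x.castSucc = _ from hx, liftParent_some]
      refine ⟨(⟨fun u => g u.castSucc, hf⟩, g (Fin.last n)), Subtype.ext (funext fun x => ?_)⟩
      induction x using Fin.lastCases <;> simp [hg]

theorem attachMaxEquiv_apply (x : PrunedForest k n × Option (Fin n × Fin k)) :
    (attachMaxEquiv x).1 = attachMax x.1.1 x.2 := rfl

theorem hasChild_attachMax_castSucc (u : Fin n) :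
    hasChild (attachMax f o) u.castSucc ↔ hasChild f u ∨ ∃ s, o = some (u, s) := by
  unfold hasChild
  simp only [Fin.exists_fin_succ', attachMax_castSucc, attachMax_last,
    liftParent_eq_some_castSucc_iff]

theorem not_hasChild_attachMax_last : ¬ hasChild (attachMax f o) (Fin.last n) := by
  rintro ⟨x, s, hx⟩
  induction x using Fin.lastCases with
  | last => exact liftParent_ne_some_last o s (by simpa using hx)
  | cast u => exact liftParent_ne_some_last (f u) s (by simpa using hx)

def leafSlots (f : Fin n → Option (Fin n × Fin k)) : Finset (Option (Fin n × Fin k)) :=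
  (nonrootLeaves f ×ˢ univ).map Function.Embedding.some

theorem card_leafSlots : #(leafSlots f) = k * #(nonrootLeaves f) := by
  rw [leafSlots, card_map, card_product, card_univ, Fintype.card_fin, mul_comm]

theorem card_nonrootLeaves_attachMax :
    #(nonrootLeaves (attachMax f o)) =
      #(nonrootLeaves f) + if o = none ∨ o ∈ leafSlots f then 0 else 1 := by
  have hcast : (univ.filter fun u : Fin n =>
      ¬ hasChild (attachMax f o) u.castSucc ∧ attachMax f o u.castSucc ≠ none) =
      (nonrootLeaves f).filter fun u => ∀ s, o ≠ some (u, s) := by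
    ext u
    simp only [nonrootLeaves, mem_filter, mem_univ, true_and, hasChild_attachMax_castSucc,
      attachMax_castSucc, ne_eq, liftParent_eq_none]
    tauto
  rw [nonrootLeaves, card_filter, Fin.sum_univ_castSucc, ← card_filter, hcast]
  simp only [not_hasChild_attachMax_last, attachMax_last, ne_eq, liftParent_eq_none,
    not_false_eq_true, true_and]
  rcases o with _ | ⟨y, s⟩
  · simp
  · have hmem : some (y, s) ∈ leafSlots f ↔ y ∈ nonrootLeaves f := by simp [leafSlots]
    have herase : ((nonrootLeaves f).filter fun u => ∀ t, some (y, s) ≠ some (u, t)) =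
        (nonrootLeaves f).erase y := by
      ext u
      simp [and_comm, eq_comm]
    rw [herase, card_erase_eq_ite]
    simp only [hmem, reduceCtorEq, not_false_eq_true, false_or]
    have := fun h : y ∈ nonrootLeaves f => card_pos.2 ⟨y, h⟩
    split_ifs <;> simp_all

def lowSlots (r : Fin n) : Finset (Option (Fin n × Fin k)) :=
  (univ.filter fun s : Fin k => (s : ℕ) < k - 1).image fun s => some (r, s)

theorem card_lowSlots (r : Fin n) : #(lowSlots (k := k) r) = k - 1 := by
  rw [lowSlots, card_image_of_injective _ fun a b h => by simpa using h, Fin.card_filter_val_lt]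
  omega

theorem some_mem_lowSlots {r y : Fin n} {s : Fin k} :
    some (y, s) ∈ lowSlots r ↔ y = r ∧ (s : ℕ) < k - 1 := by
  simp [lowSlots, eq_comm, and_comm]

theorem none_notMem_lowSlots (r : Fin n) : none ∉ lowSlots (k := k) r := by
  simp [lowSlots]

theorem inBarClass_attachMax_iff {r : Fin n} (hr : f r = none)
    (hmax : ∀ r', f r' = none → r' ≤ r) :
    inBarClass (attachMax f o) ↔ o = none ∨ (inBarClass f ∧ o ∉ lowSlots r) := by
  rcases o with _ | ⟨y, s⟩
  · simp only [true_or, iff_true]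
    exact ⟨Fin.last n, by simp, fun r' _ => Fin.le_last r', Or.inl not_hasChild_attachMax_last⟩
  have hr' : attachMax f (some (y, s)) r.castSucc = none := by simp [hr]
  have hmax' : ∀ r', attachMax f (some (y, s)) r' = none → r' ≤ r.castSucc := by
    intro r' h
    induction r' using Fin.lastCases with
    | last => simp at h
    | cast u => exact Fin.castSucc_le_castSucc_iff.2 (hmax u (by simpa using h))
  rw [inBarClass_iff hr' hmax', inBarClass_iff hr hmax, Fin.forall_fin_succ']
  simp only [attachMax_castSucc, attachMax_last, ne_eq, liftParent_eq_some_castSucc_iff,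
    some_mem_lowSlots, reduceCtorEq, false_or, Option.some.injEq, Prod.mk.injEq]
  exact and_congr_right fun _ =>
    ⟨fun h ⟨hy, hs⟩ => h s hs ⟨hy, rfl⟩, fun h j hj ⟨hy, hs⟩ => h ⟨hy, hs ▸ hj⟩⟩

theorem isPointedPartition_leafSlots_lowSlots {r : Fin n} (hr : f r = none) :
    IsPointedPartition none (leafSlots f) (lowSlots r) := by
  refine ⟨by simp [leafSlots], none_notMem_lowSlots r, disjoint_left.2 fun o ho ho' => ?_⟩
  obtain ⟨⟨y, s⟩, hys, rfl⟩ := mem_map.1 ho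
  obtain ⟨rfl, -⟩ := some_mem_lowSlots.1 ho'
  simp [nonrootLeaves, hr] at hys

end ForestAttachment

section Zeta

variable {k n : ℕ}

def IsZeta (e : StirlingPerm k n ≃ PrunedForest k n) : Prop :=
  ∀ w, apStat k n w.1 = #(nonrootLeaves (e w).1) ∧ (StartsFlat k n w.1 ↔ inBarClass (e w).1)

theorem exists_equiv_gaps_places (hk : 1 ≤ k) (hn : 1 ≤ n) {σ : Fin (k * n) → Fin n}
    {f : Fin n → Option (Fin n × Fin k)} (hf : IsForest f)
    (hap : apStat k n σ = #(nonrootLeaves f)) (hflat : StartsFlat k n σ ↔ inBarClass f) :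
    ∃ g : Fin (k * n + 1) ≃ Option (Fin n × Fin k), ∀ p,
      apStat k (n + 1) (insertMax σ p) = #(nonrootLeaves (attachMax f (g p))) ∧
      (StartsFlat k (n + 1) (insertMax σ p) ↔ inBarClass (attachMax f (g p))) := by
  have : Nonempty (Fin n) := ⟨⟨0, hn⟩⟩
  obtain ⟨r, hr, hmax⟩ := IsForest.exists_greatest_root hf
  have hX : IsPointedPartition 0 (splitGaps σ) (if StartsFlat k n σ then lowGaps k n else ∅) :=
    .ite (zero_notMem_splitGaps σ) (StartsFlat.isPointedPartition hn)
  have hY : IsPointedPartition none (leafSlots f) (if inBarClass f then lowSlots r else ∅) :=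
    .ite (isPointedPartition_leafSlots_lowSlots hr).1
      fun _ => isPointedPartition_leafSlots_lowSlots hr
  obtain ⟨g, hg⟩ := exists_equiv_preserving_parts hX hY (by simp; ring)
    (by rw [card_splitGaps, card_leafSlots, hap])
    (by simp only [apply_ite card, card_lowGaps hn, card_lowSlots, card_empty, hflat])
  refine ⟨g, fun p => ?_⟩
  obtain ⟨h0, hD, hE⟩ := hg p
  rw [apStat_insertMax hk, card_nonrootLeaves_attachMax, hap, startsFlat_insertMax_iff hk,
    inBarClass_attachMax_iff hr hmax]
  have hp0 : (p : ℕ) = 0 ↔ p = 0 := Fin.val_eq_zero_iff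
  have hsplit : Splits k (k * n) (wordOf k n σ) p ↔ p ∈ splitGaps σ := by simp [splitGaps]
  simp only [hp0, hsplit, ← h0, ← hD, ← hflat, true_and]
  rw [← hflat] at hE
  by_cases hB : StartsFlat k n σ
  · simp only [hB, if_true, lowGaps, mem_filter, mem_univ, true_and] at hE
    rw [hE, h0, ← hp0]
    simp only [hB, and_true, true_and]
    omega
  · simp [hB]

theorem exists_isZeta_succ (hk : 1 ≤ k) (hn : 1 ≤ n) {e : StirlingPerm k n ≃ PrunedForest k n}
    (he : IsZeta e) : ∃ e' : StirlingPerm k (n + 1) ≃ PrunedForest k (n + 1), IsZeta e' := by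
  choose g hg using fun σ : StirlingPerm k n =>
    exists_equiv_gaps_places hk hn (e σ).2 (he σ).1 (he σ).2
  refine ⟨(insertMaxEquiv hk).symm.trans ((Equiv.prodShear e g).trans attachMaxEquiv),
    fun w => ?_⟩
  obtain ⟨⟨σ, p⟩, rfl⟩ := (insertMaxEquiv hk).surjective w
  simpa [insertMaxEquiv_apply, attachMaxEquiv_apply] using hg σ p

theorem exists_isZeta_one (k : ℕ) : ∃ e : StirlingPerm k 1 ≃ PrunedForest k 1, IsZeta e := by
  have hw : IsKStirling k 1 fun _ => 0 :=
    ⟨fun m => by simp [Subsingleton.elim m 0], fun _ _ _ _ _ _ => (Subsingleton.elim _ _).le⟩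
  have hf : IsForest fun _ : Fin 1 => (none : Option (Fin 1 × Fin k)) := fun _ _ _ h => nomatch h
  have hroot (f : PrunedForest k 1) : f.1 = fun _ => none := funext fun x => by
    rcases h : f.1 x with _ | ⟨y, s⟩
    · rfl
    · exact absurd (f.2 x y s h) (Subsingleton.elim x y ▸ lt_irrefl x)
  refine ⟨⟨fun _ => ⟨_, hf⟩, fun _ => ⟨_, hw⟩, fun w => Subtype.ext (Subsingleton.elim _ _),
    fun f => Subtype.ext (hroot f).symm⟩, fun w => ⟨?_, iff_of_true ?_ ?_⟩⟩
  · simp [apStat, apWord, nonrootLeaves]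
  · exact fun _ _ _ => Subsingleton.elim _ _
  · exact ⟨0, rfl, fun r _ => (Subsingleton.elim r 0).le, Or.inl fun ⟨_, _, h⟩ => nomatch h⟩

theorem exists_isZeta (hk : 1 ≤ k) (hn : 1 ≤ n) :
    ∃ e : StirlingPerm k n ≃ PrunedForest k n, IsZeta e := by
  induction n, hn using Nat.le_induction with
  | base => exact exists_isZeta_one k
  | succ n hn ih => exact exists_isZeta_succ hk hn ih.choose_spec

end Zeta
end StirlingForest

/-- For `n, k ≥ 1` there is a bijection `ζ` between `k`-Stirling permutations of order
`n` and increasing pruned even `k`-ary forests on `{1,…,n}` with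
`ap(π) = lleaf(ζ(π)) − si(ζ(π))`; moreover `π` begins with `k` equal letters iff `ζ(π)`
lies in the class of forests whose rightmost tree is a singleton or has its first `k-1`
root-children as leaves. -/
theorem stirling_forest_zeta_bijection (n k : ℕ) (hn : 1 ≤ n) (hk : 1 ≤ k) :
    ∃ e : {w : Fin (k * n) → Fin n // IsKStirling k n w} ≃
        {f : Fin n → Option (Fin n × Fin k) // IsForest f},
      ∀ w, apStat k n w.1 + siStat (e w).1 = lleafStat (e w).1 ∧
        ((∀ i : Fin (k * n), (i : ℕ) < k → ∀ h0 : 0 < k * n, w.1 i = w.1 ⟨0, h0⟩)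
          ↔ inBarClass (e w).1) := by
  obtain ⟨e, he⟩ := StirlingForest.exists_isZeta hk hn
  exact ⟨e, fun w => ⟨by rw [StirlingForest.lleafStat_eq_siStat_add, (he w).1, add_comm], (he w).2⟩⟩
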